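/- arXiv:1204.1024 — 5 statements merged into one kernel-verified Lean document; each statement's English description precedes it below -/
import Mathlib

section
/- For real x > 0 and y ∈ ℝ, the real part of ln Γ(x+iy) equals -γ_E x + Σ_{n=0}^∞ ( x/(n+1) - (1/2) ln((x+n)² + y²) + ln(n)·1_{n≥1} ), where γ_E is the Euler–Mascheroni constant. -/
/-!
Gauss's limit formula `Γ(z) = lim n^z n! / (z (z+1) ⋯ (z+n))` gives, after taking `log ‖·‖`,
that the `(m+1)`-st partial sum of the series is `re z (H_{m+1} - log m) + log ‖Γ_m(z)‖`, where
`Γ_m` is the `m`-th Gauss approximant; since `H_{m+1} - log m → γ`, the partial sums tend to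
`γ re z + log ‖Γ(z)‖`. The series converges absolutely because for `n > ‖z‖` its `n`-th term is
`re z (1/(n+1) - 1/n) - re (log (1 + z/n) - z/n) = O(1/n²)`.
-/

open Complex Filter Topology Finset Nat Asymptotics

lemma sum_range_succ_log_natCast (m : ℕ) :
    ∑ n ∈ range (m + 1), Real.log n = Real.log m ! := by
  rw [sum_range_succ', factorial_eq_prod_range_add_one, Nat.cast_prod,
    Real.log_prod fun n _ => by positivity]
  simp

lemma tendsto_harmonic_add_one_sub_log :
    Tendsto (fun m : ℕ => (harmonic (m + 1) : ℝ) - Real.log m) atTop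
      (𝓝 Real.eulerMascheroniConstant) := by
  simpa [harmonic_succ, add_sub_right_comm] using
    Real.tendsto_harmonic_sub_log.add tendsto_one_div_add_atTop_nhds_zero_nat

namespace Complex

/-- At `n = 0` the last summand is `Real.log 0 = 0`, which plays the role of the indicator
`1_{n ≥ 1}`. -/
noncomputable def logNormGammaTerm (z : ℂ) (n : ℕ) : ℝ :=
  z.re / (n + 1) - Real.log ‖z + n‖ + Real.log n

lemma log_norm_GammaSeq {z : ℂ} (hz : ∀ m : ℕ, z ≠ -m) {m : ℕ} (hm : m ≠ 0) :
    Real.log ‖GammaSeq z m‖ =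
      z.re * Real.log m + Real.log m ! - ∑ j ∈ range (m + 1), Real.log ‖z + j‖ := by
  have hzj (j : ℕ) : ‖z + j‖ ≠ 0 :=
    norm_ne_zero_iff.mpr fun h => hz j (eq_neg_of_add_eq_zero_left h)
  rw [GammaSeq, norm_div, norm_mul, norm_prod, norm_natCast_cpow_of_pos (Nat.pos_of_ne_zero hm),
    norm_natCast, Real.log_div (by positivity) (prod_ne_zero_iff.mpr fun j _ => hzj j),
    Real.log_mul (by positivity) (by positivity), Real.log_rpow (by positivity),
    Real.log_prod fun j _ => hzj j]

lemma sum_range_logNormGammaTerm {z : ℂ} (hz : ∀ m : ℕ, z ≠ -m) {m : ℕ} (hm : m ≠ 0) :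
    ∑ n ∈ range (m + 1), logNormGammaTerm z n =
      z.re * (harmonic (m + 1) - Real.log m) + Real.log ‖GammaSeq z m‖ := by
  have sum_harmonic : ∑ n ∈ range (m + 1), z.re / (n + 1) = z.re * harmonic (m + 1) := by
    simp [harmonic, mul_sum, div_eq_mul_inv]
  simp only [logNormGammaTerm, sum_add_distrib, sum_sub_distrib, sum_harmonic,
    sum_range_succ_log_natCast, log_norm_GammaSeq hz hm]
  ring

lemma logNormGammaTerm_eq {z : ℂ} {n : ℕ} (hn : n ≠ 0) (hzn : z + n ≠ 0) :
    logNormGammaTerm z n = (z.re / (n + 1) - z.re / n) - (log (1 + z / n) - z / n).re := by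
  have hz : z + n = n * (1 + z / n) := by field_simp; ring
  rw [logNormGammaTerm, sub_re, log_re, div_natCast_re, hz, norm_mul, norm_natCast,
    Real.log_mul (by positivity) (norm_ne_zero_iff.mpr (right_ne_zero_of_mul (hz ▸ hzn)))]
  ring

lemma isBigO_div_add_one_sub_div (a : ℝ) :
    (fun n : ℕ => a / (n + 1) - a / n) =O[atTop] fun n => 1 / (n : ℝ) ^ 2 := by
  refine IsBigO.of_bound |a| ?_
  filter_upwards [eventually_ne_atTop 0] with n hn
  have key : a / (n + 1) - a / n = -a * (1 / (n * (n + 1))) := by field_simp; ring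
  rw [key, norm_mul, norm_neg, Real.norm_eq_abs, Real.norm_of_nonneg (by positivity),
    Real.norm_of_nonneg (by positivity)]
  gcongr
  nlinarith

lemma isBigO_log_one_add_div_sub_div (z : ℂ) :
    (fun n : ℕ => log (1 + z / n) - z / n) =O[atTop] fun n => 1 / (n : ℝ) ^ 2 := by
  refine (log_sub_self_isBigO.comp_tendsto (tendsto_const_div_atTop_nhds_zero_nat z)).trans ?_
  refine IsBigO.of_bound (‖z‖ ^ 2) (Eventually.of_forall fun n => le_of_eq ?_)
  simp [div_eq_mul_inv, mul_pow]

lemma summable_logNormGammaTerm (z : ℂ) : Summable (logNormGammaTerm z) := by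
  refine summable_of_isBigO_nat (Real.summable_one_div_nat_pow.mpr one_lt_two) ?_
  have hre : (fun n : ℕ => (log (1 + z / n) - z / n).re) =O[atTop] fun n => 1 / (n : ℝ) ^ 2 :=
    (isBigO_of_le _ fun n => abs_re_le_norm _).trans (isBigO_log_one_add_div_sub_div z)
  refine ((isBigO_div_add_one_sub_div z.re).sub hre).congr' ?_ EventuallyEq.rfl
  filter_upwards [eventually_ne_atTop 0,
    (tendsto_natCast_atTop_atTop (R := ℝ)).eventually_gt_atTop ‖z‖] with n hn hzn
  refine (logNormGammaTerm_eq hn fun h => ?_).symm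
  rw [eq_neg_of_add_eq_zero_left h, norm_neg, norm_natCast] at hzn
  exact hzn.false

lemma hasSum_logNormGammaTerm {z : ℂ} (hz : ∀ m : ℕ, z ≠ -m) :
    HasSum (logNormGammaTerm z) (z.re * Real.eulerMascheroniConstant + Real.log ‖Gamma z‖) := by
  rw [(summable_logNormGammaTerm z).hasSum_iff_tendsto_nat, ← tendsto_add_atTop_iff_nat 1]
  have hlim := (tendsto_harmonic_add_one_sub_log.const_mul z.re).add
    ((GammaSeq_tendsto_Gamma z).norm.log (norm_ne_zero_iff.mpr (Gamma_ne_zero hz)))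
  refine hlim.congr' ?_
  filter_upwards [eventually_ne_atTop 0] with m hm
  exact (sum_range_logNormGammaTerm hz hm).symm

end Complex

/-- For `x > 0` and `y ∈ ℝ`, the real part of `ln Γ(x+iy)` equals
`-γ_E x + Σ_{n=0}^∞ ( x/(n+1) - (1/2) ln((x+n)² + y²) + ln(n)·1_{n≥1} )`. -/
theorem re_log_Gamma_eq_tsum (x y : ℝ) (hx : 0 < x) :
    (Complex.log (Complex.Gamma ((x : ℂ) + (y : ℂ) * Complex.I))).re =
      -Real.eulerMascheroniConstant * x +
        ∑' n : ℕ, (x / ((n : ℝ) + 1) - (1 / 2) * Real.log ((x + n) ^ 2 + y ^ 2)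
          + if 1 ≤ n then Real.log n else 0) := by
  set z : ℂ := x + y * I
  have hre : z.re = x := by simp [z]
  have hz (m : ℕ) : z ≠ -m := fun h => by
    have : x = -m := by simpa [h] using hre.symm
    linarith [m.cast_nonneg (α := ℝ)]
  have hterm (n : ℕ) : (x / ((n : ℝ) + 1) - (1 / 2) * Real.log ((x + n) ^ 2 + y ^ 2)
      + if 1 ≤ n then Real.log n else 0) = logNormGammaTerm z n := by
    have hzn : z + n = ((x + n : ℝ) : ℂ) + y * I := by push_cast; ring
    have hlog : (if 1 ≤ n then Real.log n else 0) = Real.log n :=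
      ite_eq_left_iff.mpr fun h => by simp [Nat.lt_one_iff.mp (not_le.mp h)]
    rw [logNormGammaTerm, hzn, norm_add_mul_I, Real.log_sqrt (by positivity), hlog, hre]
    ring
  rw [tsum_congr hterm, (hasSum_logNormGammaTerm hz).tsum_eq, log_re, hre]
  ring
end

section
/- Fix θ > 0 and define g(x,y) = Re(ln Γ(x+iy)) + f_θ x - (κ_θ/2)(x² - y²) with κ_θ = Ψ'(θ) and f_θ = θΨ'(θ) - Ψ(θ). Then for all y > 0, d/dy [g(θ-y, y)] = -Σ_{n=0}^∞ 2y² / ((θ+n)((θ+n-y)² + y²)), and in particular the function y ↦ g(θ-y, y) is strictly decreasing on (0,∞). -/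
/-- The digamma function `Ψ(x) = d/dx ln Γ(x)`. -/
noncomputable def digamma (x : ℝ) : ℝ := deriv (fun t => Real.log (Real.Gamma t)) x

/-- `κ_θ = Ψ'(θ)`. -/
noncomputable def kappa (θ : ℝ) : ℝ := deriv digamma θ

/-- `f_θ = θΨ'(θ) - Ψ(θ)`. -/
noncomputable def fTheta (θ : ℝ) : ℝ := θ * deriv digamma θ - digamma θ

/-- `g(x,y) = Re(ln Γ(x+iy)) + f_θ x - (κ_θ/2)(x² - y²)`. -/
noncomputable def gFun (θ x y : ℝ) : ℝ :=
  (Complex.log (Complex.Gamma ((x : ℂ) + (y : ℂ) * Complex.I))).re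
    + fTheta θ * x - kappa θ / 2 * (x ^ 2 - y ^ 2)

/-!
Euler's approximants `Γₙ(z) = nᶻ n! / (z (z+1) ⋯ (z+n))` make `log |Γₙ(θ - y + iy)|` an explicit
function of `y`, whose derivative is
`-(log n - ∑_{k ≤ n} 1/(θ+k)) - ∑_{k ≤ n} 2y² / ((θ+k)((θ+k-y)² + y²))`.
These derivatives converge locally uniformly (the terms are `O(k⁻³)`), so their limit is the
derivative of `log |Γ(θ - y + iy)|`. The same argument on the real axis identifies
`lim (log n - ∑_{k ≤ n} 1/(θ+k))` with `Ψ(θ)`. Finally, along the antidiagonal the polynomial part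
of `g` is affine in `y` with slope `κ_θ θ - f_θ = Ψ(θ)`, which cancels the `-Ψ(θ)`.
-/

open Filter Topology Finset Real

noncomputable def logNormGammaSeq (n : ℕ) (x y : ℝ) : ℝ :=
  x * log n + log n.factorial - ∑ k ∈ range (n + 1), log ((x + k) ^ 2 + y ^ 2) / 2

theorem norm_add_mul_I_add_natCast (x y : ℝ) (k : ℕ) :
    ‖(x + y * Complex.I : ℂ) + k‖ = √((x + k) ^ 2 + y ^ 2) := by
  rw [← Complex.norm_add_mul_I]
  push_cast
  ring_nf

theorem logNormGammaSeq_eq_log_norm_GammaSeq {x y : ℝ} (h : ∀ k : ℕ, 0 < (x + k) ^ 2 + y ^ 2)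
    {n : ℕ} (hn : n ≠ 0) :
    logNormGammaSeq n x y = log ‖Complex.GammaSeq (x + y * Complex.I) n‖ := by
  have hn0 : (0 : ℝ) < n := by positivity
  have hprod : 0 < ∏ k ∈ range (n + 1), √((x + k) ^ 2 + y ^ 2) :=
    prod_pos fun k _ => sqrt_pos.mpr (h k)
  rw [Complex.GammaSeq, norm_div, norm_mul, norm_prod, ← Complex.ofReal_natCast,
    Complex.norm_cpow_eq_rpow_re_of_pos hn0, Complex.norm_natCast]
  simp only [norm_add_mul_I_add_natCast, Complex.add_re, Complex.ofReal_re, Complex.mul_re,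
    Complex.ofReal_im, Complex.I_re, Complex.I_im]
  rw [log_div (by positivity) hprod.ne', log_mul (by positivity) (by positivity),
    log_rpow hn0, log_prod fun k _ => (sqrt_pos.mpr (h k)).ne', logNormGammaSeq]
  simp only [log_sqrt (h _).le, mul_zero, zero_mul, sub_zero, add_zero]

theorem tendsto_logNormGammaSeq {x y : ℝ} (h : ∀ k : ℕ, 0 < (x + k) ^ 2 + y ^ 2) :
    Tendsto (fun n => logNormGammaSeq n x y) atTop
      (𝓝 (log ‖Complex.Gamma (x + y * Complex.I)‖)) := by
  have hpole : ∀ m : ℕ, (x + y * Complex.I : ℂ) ≠ -m := fun m hm =>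
    (sqrt_pos.mpr (h m)).ne' (by rw [← norm_add_mul_I_add_natCast, hm, neg_add_cancel, norm_zero])
  have hΓ : ‖Complex.Gamma (x + y * Complex.I)‖ ≠ 0 :=
    norm_ne_zero_iff.mpr (Complex.Gamma_ne_zero hpole)
  refine Tendsto.congr' ?_ (((continuousAt_log hΓ).tendsto.comp
    (continuous_norm.tendsto _)).comp (Complex.GammaSeq_tendsto_Gamma _))
  filter_upwards [eventually_ne_atTop 0] with n hn
  exact (logNormGammaSeq_eq_log_norm_GammaSeq h hn).symm

theorem hasDerivAt_logNormGammaSeq {x y : ℝ → ℝ} {x' y' t : ℝ} (hx : HasDerivAt x x' t)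
    (hy : HasDerivAt y y' t) (h : ∀ k : ℕ, 0 < (x t + k) ^ 2 + y t ^ 2) (n : ℕ) :
    HasDerivAt (fun s => logNormGammaSeq n (x s) (y s))
      (x' * log n - ∑ k ∈ range (n + 1), ((x t + k) * x' + y t * y') / ((x t + k) ^ 2 + y t ^ 2))
      t := by
  have hterm : ∀ k : ℕ, HasDerivAt (fun s => log ((x s + k) ^ 2 + y s ^ 2) / 2)
      (((x t + k) * x' + y t * y') / ((x t + k) ^ 2 + y t ^ 2)) t := fun k => by
    refine (((((hx.add_const (k : ℝ)).fun_pow 2).fun_add (hy.fun_pow 2)).log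
      (h k).ne').div_const 2).congr_deriv ?_
    field_simp
    ring
  exact ((hx.mul_const _).add_const _).sub (HasDerivAt.fun_sum fun k _ => hterm k)

noncomputable def digammaSeq (n : ℕ) (t : ℝ) : ℝ := log n - ∑ k ∈ range (n + 1), (t + k)⁻¹

theorem tendsto_digammaSeq_one :
    Tendsto (fun n => digammaSeq n 1) atTop (𝓝 (-eulerMascheroniConstant)) := by
  have h := tendsto_harmonic_sub_log.neg.sub (tendsto_one_div_add_atTop_nhds_zero_nat (𝕜 := ℝ))
  rw [sub_zero] at h
  refine h.congr fun n => ?_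
  simp only [digammaSeq, harmonic, sum_range_succ, Rat.cast_sum, Rat.cast_inv, Rat.cast_natCast]
  push_cast
  ring_nf

theorem summable_inv_add_pow {a : ℝ} (ha : 0 < a) {p : ℕ} (hp : 1 < p) :
    Summable fun k : ℕ => ((a + k) ^ p)⁻¹ := by
  refine ((Real.summable_one_div_nat_add_rpow a p).mpr (by exact_mod_cast hp)).congr fun k => ?_
  rw [abs_of_pos (by positivity), rpow_natCast, one_div, add_comm]

theorem tendstoUniformlyOn_add_sum {α : Type*} {c : ℕ → ℝ} {L : ℝ} {u : ℕ → α → ℝ} {M : ℕ → ℝ}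
    {s : Set α} (hc : Tendsto c atTop (𝓝 L)) (hM : Summable M)
    (hu : ∀ k, ∀ x ∈ s, ‖u k x‖ ≤ M k) :
    TendstoUniformlyOn (fun n x => c n + ∑ k ∈ range (n + 1), u k x)
      (fun x => L + ∑' k, u k x) atTop s :=
  hc.tendstoUniformlyOn_const s |>.add fun v hv =>
    (tendsto_add_atTop_nat 1).eventually (tendstoUniformlyOn_tsum_nat hM hu v hv)

theorem digammaSeq_eq_digammaSeq_one_add (n : ℕ) (t : ℝ) :
    digammaSeq n t = digammaSeq n 1 + ∑ k ∈ range (n + 1), ((1 + k : ℝ)⁻¹ - (t + k)⁻¹) := by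
  simp only [digammaSeq, sum_sub_distrib]
  ring

theorem abs_inv_one_add_sub_inv_add_le {a b t : ℝ} (ha : 0 < a) (ht : t ∈ Set.Ioo a b) (k : ℕ) :
    |(1 + k : ℝ)⁻¹ - (t + k)⁻¹| ≤ (b + 1) * ((min a 1 + k) ^ 2)⁻¹ := by
  have hm : 0 < min a 1 := lt_min ha one_pos
  have hmk : min a 1 + k ≤ 1 + k := by gcongr; exact min_le_right _ _
  have hmt : min a 1 + k ≤ t + k := by gcongr; exact (min_le_left _ _).trans ht.1.le
  have htk : 0 < t + k := by linarith
  have hnum : |t - 1| ≤ b + 1 := abs_le.mpr ⟨by linarith [ht.1, ht.2], by linarith [ht.2]⟩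
  have hden : (min a 1 + k) ^ 2 ≤ (1 + k) * (t + k) := by
    rw [sq]; exact mul_le_mul hmk hmt (by positivity) (by positivity)
  calc |(1 + k : ℝ)⁻¹ - (t + k)⁻¹| = |t - 1| / ((1 + k) * (t + k)) := by
        rw [inv_sub_inv (by positivity) htk.ne', add_sub_add_right_eq_sub, abs_div,
          abs_of_pos (mul_pos (by positivity) htk)]
    _ ≤ (b + 1) / (min a 1 + k) ^ 2 :=
      div_le_div₀ (by linarith [ht.1, ht.2]) hnum (by positivity) hden
    _ = (b + 1) * ((min a 1 + k) ^ 2)⁻¹ := div_eq_mul_inv _ _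

theorem tendstoUniformlyOn_digammaSeq {a b : ℝ} (ha : 0 < a) :
    TendstoUniformlyOn digammaSeq
      (fun t => -eulerMascheroniConstant + ∑' k : ℕ, ((1 + k : ℝ)⁻¹ - (t + k)⁻¹))
      atTop (Set.Ioo a b) := by
  refine (tendstoUniformlyOn_add_sum tendsto_digammaSeq_one
    ((summable_inv_add_pow (lt_min ha one_pos) one_lt_two).mul_left (b + 1))
    fun k t ht => abs_inv_one_add_sub_inv_add_le ha ht k).congr ?_
  exact Eventually.of_forall fun n t _ => (digammaSeq_eq_digammaSeq_one_add n t).symm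

theorem tendsto_digammaSeq {θ : ℝ} (hθ : 0 < θ) :
    Tendsto (fun n => digammaSeq n θ) atTop (𝓝 (digamma θ)) := by
  have hθs : θ ∈ Set.Ioo (θ / 2) (θ + 1) := ⟨by linarith, by linarith⟩
  have hU := tendstoUniformlyOn_digammaSeq (half_pos hθ) (b := θ + 1)
  have htk : ∀ t ∈ Set.Ioo (θ / 2) (θ + 1), ∀ k : ℕ, 0 < t + k :=
    fun t ht k => by linarith [ht.1, half_pos hθ, k.cast_nonneg (α := ℝ)]
  have hpos : ∀ t ∈ Set.Ioo (θ / 2) (θ + 1), ∀ k : ℕ, 0 < (t + k) ^ 2 + 0 ^ 2 :=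
    fun t ht k => by have := htk t ht k; positivity
  have hderiv : ∀ n : ℕ, ∀ t ∈ Set.Ioo (θ / 2) (θ + 1),
      HasDerivAt (fun s => logNormGammaSeq n s 0) (digammaSeq n t) t := fun n t ht => by
    refine (hasDerivAt_logNormGammaSeq (hasDerivAt_id t) (hasDerivAt_const t 0)
      (hpos t ht) n).congr_deriv ?_
    simp only [id, one_mul, mul_one, mul_zero, add_zero, digammaSeq]
    congr 1
    refine sum_congr rfl fun k _ => ?_
    rw [zero_pow two_ne_zero, add_zero, sq, div_mul_cancel_left₀ (htk t ht k).ne']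
  have hlim : ∀ t ∈ Set.Ioo (θ / 2) (θ + 1),
      Tendsto (fun n => logNormGammaSeq n t 0) atTop (𝓝 (log (Gamma t))) := fun t ht => by
    have := tendsto_logNormGammaSeq (hpos t ht)
    rwa [Complex.ofReal_zero, zero_mul, add_zero, Complex.Gamma_ofReal, Complex.norm_real,
      Real.norm_of_nonneg (Gamma_pos_of_pos (by simpa using htk t ht 0)).le] at this
  have hψ := (hasDerivAt_of_tendstoUniformlyOn isOpen_Ioo hU (Eventually.of_forall hderiv) hlim
    hθs).deriv
  rw [digamma, hψ]
  exact hU.tendsto_at hθs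

theorem sq_div_two_le_sq_sub_add_sq (u y : ℝ) : u ^ 2 / 2 ≤ (u - y) ^ 2 + y ^ 2 := by
  nlinarith [sq_nonneg (u - 2 * y)]

theorem sq_sub_add_sq_pos {u : ℝ} (hu : 0 < u) (y : ℝ) : 0 < (u - y) ^ 2 + y ^ 2 :=
  lt_of_lt_of_le (by positivity) (sq_div_two_le_sq_sub_add_sq u y)

theorem antidiag_term_le {u : ℝ} (hu : 0 < u) (y : ℝ) :
    2 * y ^ 2 / (u * ((u - y) ^ 2 + y ^ 2)) ≤ 4 * y ^ 2 * (u ^ 3)⁻¹ := by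
  have hD := sq_sub_add_sq_pos hu y
  rw [div_le_iff₀ (by positivity)]
  calc 2 * y ^ 2 = 4 * y ^ 2 * (u ^ 3)⁻¹ * (u * (u ^ 2 / 2)) := by field_simp; ring
    _ ≤ 4 * y ^ 2 * (u ^ 3)⁻¹ * (u * ((u - y) ^ 2 + y ^ 2)) := by
      gcongr; exact sq_div_two_le_sq_sub_add_sq u y

theorem antidiag_logDeriv_term_eq {u : ℝ} (hu : 0 < u) (y : ℝ) :
    ((u - y) * (-1) + y * 1) / ((u - y) ^ 2 + y ^ 2)
      = -u⁻¹ + 2 * y ^ 2 / (u * ((u - y) ^ 2 + y ^ 2)) := by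
  have hD := sq_sub_add_sq_pos hu y
  field_simp
  ring

theorem hasDerivAt_log_norm_Gamma_antidiag {θ : ℝ} (hθ : 0 < θ) (y : ℝ) :
    HasDerivAt (fun y : ℝ => log ‖Complex.Gamma ((θ - y : ℝ) + y * Complex.I)‖)
      (-digamma θ - ∑' k : ℕ, 2 * y ^ 2 / ((θ + k) * ((θ + k - y) ^ 2 + y ^ 2))) y := by
  set b := |y| + 1
  have hys : y ∈ Set.Ioo (-b) b := abs_lt.mp (lt_add_one _)
  have hθk : ∀ k : ℕ, 0 < θ + k := fun k => by positivity
  have hD : ∀ x, ∀ k : ℕ, 0 < (θ - x + k) ^ 2 + x ^ 2 := fun x k => by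
    rw [sub_add_eq_add_sub]
    exact sq_sub_add_sq_pos (hθk k) x
  have hU := tendstoUniformlyOn_add_sum (tendsto_digammaSeq hθ).neg
    ((summable_inv_add_pow hθ (by norm_num : 1 < 3)).mul_left (4 * b ^ 2))
    (u := fun k x => -(2 * x ^ 2 / ((θ + k) * ((θ + k - x) ^ 2 + x ^ 2))))
    (s := Set.Ioo (-b) b) fun k x hx => by
      have := sq_sub_add_sq_pos (hθk k) x
      rw [norm_neg, Real.norm_of_nonneg (by positivity)]
      refine (antidiag_term_le (hθk k) x).trans ?_
      gcongr 4 * ?_ * _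
      exact sq_le_sq' hx.1.le hx.2.le
  have hderiv : ∀ n : ℕ, ∀ x ∈ Set.Ioo (-b) b,
      HasDerivAt (fun s => logNormGammaSeq n (θ - s) s)
        (-digammaSeq n θ + ∑ k ∈ range (n + 1),
          -(2 * x ^ 2 / ((θ + k) * ((θ + k - x) ^ 2 + x ^ 2)))) x := fun n x _ => by
    refine (hasDerivAt_logNormGammaSeq ((hasDerivAt_id' x).const_sub θ) (hasDerivAt_id' x)
      (hD x) n).congr_deriv ?_
    simp only [sub_add_eq_add_sub, antidiag_logDeriv_term_eq (hθk _), sum_add_distrib,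
      sum_neg_distrib, digammaSeq]
    ring
  have hlim : ∀ x ∈ Set.Ioo (-b) b, Tendsto (fun n => logNormGammaSeq n (θ - x) x) atTop
      (𝓝 (log ‖Complex.Gamma ((θ - x : ℝ) + x * Complex.I)‖)) :=
    fun x _ => tendsto_logNormGammaSeq (hD x)
  have := hasDerivAt_of_tendstoUniformlyOn isOpen_Ioo hU (Eventually.of_forall hderiv) hlim hys
  rwa [tsum_neg, ← sub_eq_add_neg] at this

theorem summable_antidiag_term {θ : ℝ} (hθ : 0 < θ) (y : ℝ) :
    Summable fun k : ℕ => 2 * y ^ 2 / ((θ + k) * ((θ + k - y) ^ 2 + y ^ 2)) := by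
  refine ((summable_inv_add_pow hθ (by norm_num : 1 < 3)).mul_left (4 * y ^ 2)).of_nonneg_of_le
    (fun k => ?_) fun k => antidiag_term_le (by positivity) y
  have : 0 < (θ + k - y) ^ 2 + y ^ 2 := sq_sub_add_sq_pos (by positivity) y
  positivity

theorem hasDerivAt_gFun_antidiag {θ : ℝ} (hθ : 0 < θ) (y : ℝ) :
    HasDerivAt (fun y => gFun θ (θ - y) y)
      (-(∑' n : ℕ, 2 * y ^ 2 / ((θ + n) * ((θ + n - y) ^ 2 + y ^ 2)))) y := by
  have hsplit : (fun y => gFun θ (θ - y) y) = fun y =>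
      log ‖Complex.Gamma ((θ - y : ℝ) + y * Complex.I)‖
        + ((fTheta θ * θ - kappa θ / 2 * θ ^ 2) + digamma θ * y) := by
    funext y
    rw [gFun, Complex.log_re]
    simp only [fTheta, kappa]
    ring
  rw [hsplit]
  exact ((hasDerivAt_log_norm_Gamma_antidiag hθ y).fun_add
    (((hasDerivAt_id' y).const_mul (digamma θ)).const_add _)).congr_deriv (by ring)

/-- For `θ > 0` and `y > 0`,
`d/dy [g(θ-y, y)] = -Σ_{n=0}^∞ 2y² / ((θ+n)((θ+n-y)² + y²))`, and in particular
`y ↦ g(θ-y, y)` is strictly decreasing on `(0,∞)`. -/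
theorem gFun_antidiag_deriv_and_strictAnti (θ : ℝ) (hθ : 0 < θ) :
    (∀ y : ℝ, 0 < y →
      HasDerivAt (fun y => gFun θ (θ - y) y)
        (-(∑' n : ℕ, 2 * y ^ 2 / ((θ + n) * ((θ + n - y) ^ 2 + y ^ 2)))) y)
    ∧ StrictAntiOn (fun y => gFun θ (θ - y) y) (Set.Ioi 0) := by
  refine ⟨fun y _ => hasDerivAt_gFun_antidiag hθ y, ?_⟩
  refine strictAntiOn_of_deriv_neg (convex_Ioi 0)
    (fun y _ => (hasDerivAt_gFun_antidiag hθ y).continuousAt.continuousWithinAt) fun y hy => ?_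
  rw [interior_Ioi] at hy
  have hy : 0 < y := hy
  rw [(hasDerivAt_gFun_antidiag hθ y).deriv, neg_lt_zero]
  exact (summable_antidiag_term hθ y).tsum_pos (fun k => by positivity) 0 (by positivity)
end

section
/- Fix θ > 0 and let g(x,y) = Re(ln Γ(x+iy)) + f_θ x - (κ_θ/2)(x²-y²) with κ_θ = Ψ'(θ), f_θ = θΨ'(θ) - Ψ(θ). Then for every fixed x ≥ θ, the function y ↦ g(x,y) is strictly increasing on (0,∞); moreover ∂g/∂y (x,y) = Σ_{n=0}^∞ ( y/(θ+n)² - y/((x+n)²+y²) ), which vanishes at y = 0 and is strictly positive for y > 0. -/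
open Filter Topology Finset

lemma summable_one_div_add_sq {c : ℝ} (hc : 0 < c) : Summable fun k : ℕ => 1 / (c + k) ^ 2 := by
  refine ((Real.summable_one_div_nat_add_rpow c 2).mpr one_lt_two).congr fun k => ?_
  rw [abs_of_pos (by positivity), add_comm]
  norm_cast

theorem hasDerivAt_of_tendsto_of_hasDerivAt_add_sum {𝕜 E : Type*} [RCLike 𝕜]
    [NormedAddCommGroup E] [NormedSpace 𝕜 E] [CompleteSpace E] {s : Set 𝕜} (hs : IsOpen s)
    {F : ℕ → 𝕜 → E} {f : 𝕜 → E} {c : ℕ → E} {c₀ : E} {g : ℕ → 𝕜 → E} {u : ℕ → ℝ}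
    (hu : Summable u) (hgu : ∀ k, ∀ t ∈ s, ‖g k t‖ ≤ u k) (hc : Tendsto c atTop (𝓝 c₀))
    (hF : ∀ n, ∀ t ∈ s, HasDerivAt (F n) (c n + ∑ k ∈ range (n + 1), g k t) t)
    (hFf : ∀ t ∈ s, Tendsto (F · t) atTop (𝓝 (f t))) {t : 𝕜} (ht : t ∈ s) :
    HasDerivAt f (c₀ + ∑' k, g k t) t := by
  have hsum : TendstoUniformlyOn (fun n t => ∑ k ∈ range (n + 1), g k t) (fun t => ∑' k, g k t)
      atTop s := fun v hv =>
    (tendsto_finset_range.comp (tendsto_add_atTop_nat 1)).eventually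
      (tendstoUniformlyOn_tsum hu hgu v hv)
  exact hasDerivAt_of_tendstoUniformlyOn hs ((hc.tendstoUniformlyOn_const s).add hsum)
    (Eventually.of_forall hF) hFf ht

lemma Complex.ne_neg_natCast_of_re_pos {z : ℂ} (hz : 0 < z.re) (m : ℕ) : z ≠ -m := by
  rintro rfl
  simp at hz
  linarith [(m.cast_nonneg : (0 : ℝ) ≤ m)]

lemma Complex.log_norm_GammaSeq_s4 {z : ℂ} (hz : ∀ m : ℕ, z ≠ -m) {n : ℕ} (hn : n ≠ 0) :
    Real.log ‖GammaSeq z n‖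
      = z.re * Real.log n + Real.log n.factorial - ∑ k ∈ range (n + 1), Real.log ‖z + k‖ := by
  have hzk : ∀ k ∈ range (n + 1), ‖z + k‖ ≠ 0 := fun k _ =>
    norm_ne_zero_iff.mpr fun h => hz k (eq_neg_of_add_eq_zero_left h)
  have hn' : (0 : ℝ) < n := Nat.cast_pos.mpr (Nat.pos_of_ne_zero hn)
  have hpow : ‖(n : ℂ) ^ z‖ = (n : ℝ) ^ z.re := by
    rw [← ofReal_natCast, norm_cpow_eq_rpow_re_of_pos hn']
  rw [GammaSeq, norm_div, norm_mul, norm_prod, norm_natCast, hpow,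
    Real.log_div (by positivity) (prod_ne_zero_iff.mpr hzk), Real.log_mul (by positivity)
      (by positivity), Real.log_rpow hn', Real.log_prod hzk]

lemma Complex.tendsto_log_norm_GammaSeq {z : ℂ} (hz : ∀ m : ℕ, z ≠ -m) :
    Tendsto (fun n : ℕ => z.re * Real.log n + Real.log n.factorial
      - ∑ k ∈ range (n + 1), Real.log ‖z + k‖) atTop (𝓝 (Real.log ‖Gamma z‖)) := by
  have hlim : Tendsto (fun n => Real.log ‖GammaSeq z n‖) atTop (𝓝 (Real.log ‖Gamma z‖)) :=
    (Real.continuousAt_log (norm_ne_zero_iff.mpr (Gamma_ne_zero hz))).tendsto.comp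
      (GammaSeq_tendsto_Gamma z).norm
  refine hlim.congr' ?_
  filter_upwards [eventually_ne_atTop 0] with n hn using log_norm_GammaSeq_s4 hz hn

lemma tendsto_log_sub_harmonic_succ :
    Tendsto (fun n : ℕ => Real.log n - harmonic (n + 1)) atTop
      (𝓝 (-Real.eulerMascheroniConstant)) := by
  have h₁ := Real.tendsto_harmonic_sub_log.comp (tendsto_add_atTop_nat 1)
  have h₂ := (Real.tendsto_log_comp_add_sub_log 1).comp tendsto_natCast_atTop_atTop
  simpa using (h₁.add h₂).neg

lemma abs_one_div_succ_sub_one_div_add_le {a b t : ℝ} (ha : 0 < a) (ht : t ∈ Set.Ioo a b)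
    (k : ℕ) : |1 / ((k : ℝ) + 1) - 1 / (t + k)| ≤ (b + 1) / min a 1 * (1 / (1 + k) ^ 2) := by
  obtain ⟨hat, htb⟩ := ht
  have hm : 0 < min a 1 := lt_min ha one_pos
  have hk : (0 : ℝ) ≤ k := k.cast_nonneg
  have htk : 0 < t + k := by linarith
  have hden : min a 1 * ((k : ℝ) + 1) ^ 2 ≤ ((k : ℝ) + 1) * (t + k) := by
    have : min a 1 * ((k : ℝ) + 1) ≤ t + k := by
      nlinarith [min_le_left a 1, min_le_right a 1]
    nlinarith
  have hnum : |t - 1| ≤ b + 1 := abs_le.mpr ⟨by linarith, by linarith⟩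
  calc |1 / ((k : ℝ) + 1) - 1 / (t + k)| = |t - 1| / (((k : ℝ) + 1) * (t + k)) := by
        rw [← abs_of_pos (by positivity : (0 : ℝ) < ((k : ℝ) + 1) * (t + k)), ← abs_div]
        congr 1
        field_simp
        ring
    _ ≤ (b + 1) / (min a 1 * ((k : ℝ) + 1) ^ 2) :=
        div_le_div₀ (by linarith [abs_nonneg (t - 1)]) hnum (by positivity) hden
    _ = (b + 1) / min a 1 * (1 / (1 + k) ^ 2) := by
        rw [add_comm 1 (k : ℝ)]
        field_simp

lemma summable_one_div_succ_sub_one_div_add {t : ℝ} (ht : 0 < t) :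
    Summable fun k : ℕ => 1 / ((k : ℝ) + 1) - 1 / (t + k) :=
  ((summable_one_div_add_sq one_pos).mul_left ((t + 1 + 1) / min (t / 2) 1)).of_norm_bounded
    fun k => abs_one_div_succ_sub_one_div_add_le (half_pos ht) ⟨half_lt_self ht, lt_add_one t⟩ k

lemma hasDerivAt_log_Gamma {t : ℝ} (ht : 0 < t) :
    HasDerivAt (fun t => Real.log (Real.Gamma t))
      (-Real.eulerMascheroniConstant + ∑' k : ℕ, (1 / ((k : ℝ) + 1) - 1 / (t + k))) t := by
  have hpos : ∀ s ∈ Set.Ioo (t / 2) (t + 1), ∀ k : ℕ, 0 < s + k := fun s hs k => by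
    linarith [hs.1, (k.cast_nonneg : (0 : ℝ) ≤ k)]
  -- `log n - ∑_{k ≤ n} 1/(s+k)` is split as `(log n - harmonic (n+1))` plus a uniformly
  -- convergent series.
  refine hasDerivAt_of_tendsto_of_hasDerivAt_add_sum isOpen_Ioo
    (F := fun n s => s * Real.log n + Real.log n.factorial - ∑ k ∈ range (n + 1), Real.log (s + k))
    (g := fun k s => 1 / ((k : ℝ) + 1) - 1 / (s + k))
    ((summable_one_div_add_sq one_pos).mul_left ((t + 1 + 1) / min (t / 2) 1))
    (fun k s hs => abs_one_div_succ_sub_one_div_add_le (half_pos ht) hs k)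
    tendsto_log_sub_harmonic_succ (fun n s hs => ?_) (fun s hs => ?_)
    ⟨half_lt_self ht, lt_add_one t⟩
  · have hsum : HasDerivAt (fun s : ℝ => ∑ k ∈ range (n + 1), Real.log (s + k))
        (∑ k ∈ range (n + 1), 1 / (s + k)) s :=
      HasDerivAt.fun_sum fun k _ => by
        simpa using ((hasDerivAt_id s).add_const (k : ℝ)).log (hpos s hs k).ne'
    have hharmonic : (harmonic (n + 1) : ℝ) = ∑ k ∈ range (n + 1), 1 / ((k : ℝ) + 1) := by
      simp [harmonic]
    refine ((((hasDerivAt_id s).mul_const (Real.log n)).add_const _).sub hsum).congr_deriv ?_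
    rw [hharmonic, sum_sub_distrib]
    ring
  · have hs₀ : 0 < s := by linarith [hs.1]
    have := Complex.tendsto_log_norm_GammaSeq
      (Complex.ne_neg_natCast_of_re_pos (z := s) (by simpa using hs₀))
    convert this using 2 with n
    · simp only [Complex.ofReal_re]
      congr 1
      refine sum_congr rfl fun k _ => ?_
      rw [← Complex.ofReal_natCast, ← Complex.ofReal_add, Complex.norm_real, Real.norm_eq_abs,
        Real.log_abs]
    · rw [Complex.Gamma_ofReal, Complex.norm_real, Real.norm_eq_abs, Real.log_abs]

lemma digamma_eq_tsum {t : ℝ} (ht : 0 < t) :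
    digamma t = -Real.eulerMascheroniConstant + ∑' k : ℕ, (1 / ((k : ℝ) + 1) - 1 / (t + k)) :=
  (hasDerivAt_log_Gamma ht).deriv

lemma hasDerivAt_digamma {t : ℝ} (ht : 0 < t) :
    HasDerivAt digamma (∑' k : ℕ, 1 / (t + k) ^ 2) t := by
  have hpos : ∀ s ∈ Set.Ioo (t / 2) (t + 1), ∀ k : ℕ, 0 < s + k := fun s hs k => by
    linarith [hs.1, (k.cast_nonneg : (0 : ℝ) ≤ k)]
  have hterm : ∀ (k : ℕ), ∀ s ∈ Set.Ioo (t / 2) (t + 1),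
      HasDerivAt (fun s : ℝ => 1 / ((k : ℝ) + 1) - 1 / (s + k)) (1 / (s + k) ^ 2) s :=
    fun k s hs => by
      have hinv := ((hasDerivAt_id s).add_const (k : ℝ)).inv (hpos s hs k).ne'
      simp only [one_div]
      exact (hinv.const_sub ((k : ℝ) + 1)⁻¹).congr_deriv (by simp only [id]; ring)
  have hbound : ∀ (k : ℕ), ∀ s ∈ Set.Ioo (t / 2) (t + 1),
      ‖1 / (s + k) ^ 2‖ ≤ 1 / (t / 2 + k) ^ 2 := fun k s hs => by
    rw [Real.norm_of_nonneg (by have := hpos s hs k; positivity)]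
    have : t / 2 + k ≤ s + k := by linarith [hs.1]
    gcongr
  have ht_mem : t ∈ Set.Ioo (t / 2) (t + 1) := ⟨half_lt_self ht, lt_add_one t⟩
  have hseries := (hasDerivAt_tsum_of_isPreconnected (summable_one_div_add_sq (half_pos ht))
    isOpen_Ioo isPreconnected_Ioo hterm hbound ht_mem
      (summable_one_div_succ_sub_one_div_add ht) ht_mem).const_add
      (-Real.eulerMascheroniConstant)
  refine hseries.congr_of_eventuallyEq ?_
  filter_upwards [Ioi_mem_nhds ht] with s hs using digamma_eq_tsum hs

lemma kappa_eq_tsum {θ : ℝ} (hθ : 0 < θ) : kappa θ = ∑' k : ℕ, 1 / (θ + k) ^ 2 :=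
  (hasDerivAt_digamma hθ).deriv

lemma log_norm_add_mul_I (a b : ℝ) :
    Real.log ‖(a : ℂ) + b * Complex.I‖ = Real.log (a ^ 2 + b ^ 2) / 2 := by
  rw [Complex.norm_add_mul_I, Real.log_sqrt (by positivity)]

lemma hasDerivAt_log_norm_Gamma_add_mul_I {x : ℝ} (hx : 0 < x) (y : ℝ) :
    HasDerivAt (fun t : ℝ => Real.log ‖Complex.Gamma (x + t * Complex.I)‖)
      (-∑' k : ℕ, y / ((x + k) ^ 2 + y ^ 2)) y := by
  have hpos : ∀ (k : ℕ) (t : ℝ), 0 < (x + k) ^ 2 + t ^ 2 := fun k t => by positivity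
  set R := |y| + 1
  have hbound : ∀ (k : ℕ), ∀ t ∈ Metric.ball (0 : ℝ) R,
      ‖-(t / ((x + k) ^ 2 + t ^ 2))‖ ≤ R * (1 / (x + k) ^ 2) := fun k t ht => by
    rw [norm_neg, Real.norm_eq_abs, abs_div, abs_of_pos (hpos k t), mul_one_div]
    have : |t| < R := by simpa using ht
    exact div_le_div₀ (by positivity) this.le (by positivity) (by nlinarith)
  have hderiv : ∀ n : ℕ, ∀ t ∈ Metric.ball (0 : ℝ) R, HasDerivAt
      (fun t => x * Real.log n + Real.log n.factorial
        - ∑ k ∈ range (n + 1), Real.log ((x + k) ^ 2 + t ^ 2) / 2)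
      (0 + ∑ k ∈ range (n + 1), -(t / ((x + k) ^ 2 + t ^ 2))) t := fun n t _ => by
    have hsum : HasDerivAt (fun t : ℝ => ∑ k ∈ range (n + 1), Real.log ((x + k) ^ 2 + t ^ 2) / 2)
        (∑ k ∈ range (n + 1), t / ((x + k) ^ 2 + t ^ 2)) t :=
      HasDerivAt.fun_sum fun k _ =>
        ((((hasDerivAt_pow 2 t).const_add _).log (hpos k t).ne').div_const 2).congr_deriv
          (by field_simp; ring)
    exact (hsum.const_sub _).congr_deriv (by rw [zero_add, sum_neg_distrib])
  have hlimit : ∀ t ∈ Metric.ball (0 : ℝ) R, Tendsto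
      (fun n : ℕ => x * Real.log n + Real.log n.factorial
        - ∑ k ∈ range (n + 1), Real.log ((x + k) ^ 2 + t ^ 2) / 2)
      atTop (𝓝 (Real.log ‖Complex.Gamma (x + t * Complex.I)‖)) := fun t _ => by
    have := Complex.tendsto_log_norm_GammaSeq
      (Complex.ne_neg_natCast_of_re_pos (z := x + t * Complex.I) (by simpa using hx))
    convert this using 4 with n k
    · simp
    · rw [show (x : ℂ) + t * Complex.I + k = ((x + k : ℝ) : ℂ) + t * Complex.I by push_cast; ring,
        log_norm_add_mul_I]
  simpa [tsum_neg] using hasDerivAt_of_tendsto_of_hasDerivAt_add_sum Metric.isOpen_ball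
    ((summable_one_div_add_sq hx).mul_left R) hbound tendsto_const_nhds hderiv hlimit
    (by simp [R])

lemma summable_div_add_sq {c : ℝ} (hc : 0 < c) (y : ℝ) :
    Summable fun k : ℕ => y / (c + k) ^ 2 :=
  ((summable_one_div_add_sq hc).mul_left y).congr fun _ => mul_one_div _ _

lemma summable_div_add_sq_add_sq {x : ℝ} (hx : 0 < x) (y : ℝ) :
    Summable fun k : ℕ => y / ((x + k) ^ 2 + y ^ 2) :=
  ((summable_one_div_add_sq hx).mul_left |y|).of_norm_bounded fun k => by
    rw [Real.norm_eq_abs, abs_div, abs_of_pos (by positivity : (0 : ℝ) < (x + k) ^ 2 + y ^ 2),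
      mul_one_div]
    exact div_le_div_of_nonneg_left (abs_nonneg y) (by positivity) (by nlinarith)

lemma hasDerivAt_gFun {θ x : ℝ} (hθ : 0 < θ) (hx : 0 < x) (y : ℝ) :
    HasDerivAt (fun y => gFun θ x y)
      (∑' n : ℕ, (y / (θ + n) ^ 2 - y / ((x + n) ^ 2 + y ^ 2))) y := by
  have hquad : HasDerivAt (fun t : ℝ => x ^ 2 - t ^ 2) (-(2 * y)) y := by
    simpa using (hasDerivAt_pow 2 y).const_sub (x ^ 2)
  have hg : (fun t => gFun θ x t) = fun t : ℝ => Real.log ‖Complex.Gamma (x + t * Complex.I)‖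
      + fTheta θ * x - kappa θ / 2 * (x ^ 2 - t ^ 2) := by
    funext t
    simp [gFun, Complex.log_re]
  have hκ : ∑' n : ℕ, y / (θ + n) ^ 2 = kappa θ * y := by
    simp_rw [kappa_eq_tsum hθ, ← tsum_mul_right, one_div_mul_eq_div]
  rw [hg, Summable.tsum_sub (summable_div_add_sq hθ y) (summable_div_add_sq_add_sq hx y), hκ]
  exact (((hasDerivAt_log_norm_Gamma_add_mul_I hx y).add_const _).sub
    (hquad.const_mul (kappa θ / 2))).congr_deriv (by ring)

lemma tsum_div_sq_sub_div_add_sq_pos {θ x y : ℝ} (hθ : 0 < θ) (hx : θ ≤ x) (hy : 0 < y) :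
    0 < ∑' n : ℕ, (y / (θ + n) ^ 2 - y / ((x + n) ^ 2 + y ^ 2)) := by
  have hterm : ∀ n : ℕ, 0 < y / (θ + n) ^ 2 - y / ((x + n) ^ 2 + y ^ 2) := fun n => by
    have hθn : 0 < θ + n := by positivity
    have : (θ + n) ^ 2 < (x + n) ^ 2 + y ^ 2 := by nlinarith
    exact sub_pos.mpr (div_lt_div_of_pos_left hy (by positivity) this)
  exact ((summable_div_add_sq hθ y).sub (summable_div_add_sq_add_sq (hθ.trans_le hx) y)).tsum_pos
    (fun n => (hterm n).le) 0 (hterm 0)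

/-- For `θ > 0` and fixed `x ≥ θ`, `y ↦ g(x,y)` is strictly increasing on `(0,∞)`;
its derivative is `Σ_{n=0}^∞ ( y/(θ+n)² - y/((x+n)²+y²) )`, which vanishes at `y = 0`
and is strictly positive for `y > 0`. -/
theorem gFun_vertical_deriv_and_strictMono (θ : ℝ) (hθ : 0 < θ) (x : ℝ) (hx : θ ≤ x) :
    (∀ y : ℝ, HasDerivAt (fun y => gFun θ x y)
        (∑' n : ℕ, (y / (θ + n) ^ 2 - y / ((x + n) ^ 2 + y ^ 2))) y)
    ∧ (∑' n : ℕ, ((0 : ℝ) / (θ + n) ^ 2 - 0 / ((x + n) ^ 2 + (0 : ℝ) ^ 2))) = 0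
    ∧ (∀ y : ℝ, 0 < y → 0 < ∑' n : ℕ, (y / (θ + n) ^ 2 - y / ((x + n) ^ 2 + y ^ 2)))
    ∧ StrictMonoOn (fun y => gFun θ x y) (Set.Ioi 0) := by
  have hderiv := hasDerivAt_gFun hθ (hθ.trans_le hx)
  refine ⟨hderiv, by simp, fun y hy => tsum_div_sq_sub_div_add_sq_pos hθ hx hy, ?_⟩
  refine strictMonoOn_of_deriv_pos (convex_Ioi 0)
    (fun y _ => (hderiv y).continuousAt.continuousWithinAt) fun y hy => ?_
  rw [interior_Ioi] at hy
  rw [(hderiv y).deriv]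
  exact tsum_div_sq_sub_div_add_sq_pos hθ hx hy
end

section
/- For complex S with positive real part and complex u with 0 < Re(u) < 1, one has π S^u / sin(πu) = ∫_ℝ S e^{ut} / (S + e^t) dt, where S^u is defined with respect to the principal branch. -/
/-!
After dividing by `S`, both sides are holomorphic in `S` on the right half-plane (the integral by
differentiation under the integral sign, with the majorant `e^{t Re u} / (δ + e^t)`), so by the
identity theorem it suffices to take `S = s > 0`. There the shift `t ↦ t + log s` pulls out `s ^ (u - 1)`, and the
substitution `x = e^t / (1 + e^t)` turns the remaining integral into
`B(u, 1 - u) = Γ(u) Γ(1 - u) = π / sin (π u)`.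
-/

open Complex MeasureTheory Set Filter Topology
open scoped Real

lemma Real.integrable_exp_mul_div_add_exp {a δ : ℝ} (ha0 : 0 < a) (ha1 : a < 1) (hδ : 0 < δ) :
    Integrable fun t : ℝ => Real.exp (a * t) / (δ + Real.exp t) := by
  have hcont : Continuous fun t : ℝ => Real.exp (a * t) / (δ + Real.exp t) :=
    by fun_prop (disch := exact fun t => by positivity)
  rw [← integrableOn_univ, ← Iic_union_Ioi (a := 0)]
  refine IntegrableOn.union ?_ ?_
  · refine ((integrableOn_exp_mul_Iic ha0 0).div_const δ).mono'
      hcont.aestronglyMeasurable.restrict (Eventually.of_forall fun t => ?_)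
    rw [Real.norm_of_nonneg (by positivity)]
    gcongr
    linarith [Real.exp_pos t]
  · refine (integrableOn_exp_mul_Ioi (by linarith : a - 1 < 0) 0).mono'
      hcont.aestronglyMeasurable.restrict (Eventually.of_forall fun t => ?_)
    rw [Real.norm_of_nonneg (by positivity), sub_mul, one_mul, Real.exp_sub]
    gcongr
    linarith

namespace Complex

lemma re_add_exp_le_norm (S : ℂ) (t : ℝ) : S.re + Real.exp t ≤ ‖S + exp t‖ := by
  simpa [← ofReal_exp] using re_le_norm (S + exp t)

lemma norm_exp_mul_ofReal (u : ℂ) (t : ℝ) : ‖exp (u * t)‖ = Real.exp (u.re * t) := by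
  rw [norm_exp, re_mul_ofReal]

lemma integrable_exp_mul_div_add_exp {u S : ℂ} (hu0 : 0 < u.re) (hu1 : u.re < 1)
    (hS : 0 < S.re) : Integrable fun t : ℝ => exp (u * t) / (S + exp t) := by
  refine (Real.integrable_exp_mul_div_add_exp hu0 hu1 hS).mono'
    (by fun_prop : Measurable _).aestronglyMeasurable (Eventually.of_forall fun t => ?_)
  rw [norm_div, norm_exp_mul_ofReal]
  gcongr
  exact re_add_exp_le_norm S t

lemma hasDerivAt_exp_mul_div_add_exp (u : ℂ) (t : ℝ) {S : ℂ} (hS : S + exp t ≠ 0) :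
    HasDerivAt (fun S => exp (u * t) / (S + exp t)) (-exp (u * t) / (S + exp t) ^ 2) S := by
  simpa [div_eq_mul_inv, neg_div] using
    (((hasDerivAt_id S).add_const (exp t)).inv hS).const_mul (exp (u * t))

lemma differentiableOn_integral_exp_mul_div_add_exp {u : ℂ} (hu0 : 0 < u.re) (hu1 : u.re < 1) :
    DifferentiableOn ℂ (fun S => ∫ t : ℝ, exp (u * t) / (S + exp t)) {S | 0 < S.re} := by
  intro S₀ (hS₀ : 0 < S₀.re)
  set δ := S₀.re / 2
  have hδ : 0 < δ := half_pos hS₀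
  have hnhds : {S : ℂ | δ < S.re} ∈ 𝓝 S₀ :=
    (isOpen_lt continuous_const continuous_re).mem_nhds (half_lt_self hS₀)
  have hle : ∀ t : ℝ, ∀ S ∈ {S : ℂ | δ < S.re}, δ + Real.exp t ≤ ‖S + exp t‖ := fun t S hS =>
    (add_le_add_left (le_of_lt hS) _).trans (re_add_exp_le_norm S t)
  have hne : ∀ t : ℝ, ∀ S ∈ {S : ℂ | δ < S.re}, S + exp t ≠ 0 := fun t S hS =>
    norm_pos_iff.mp ((by positivity : 0 < δ + Real.exp t).trans_le (hle t S hS))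
  have hdom : ∀ t : ℝ, ∀ S ∈ {S : ℂ | δ < S.re},
      ‖-exp (u * t) / (S + exp t) ^ 2‖ ≤ δ⁻¹ * (Real.exp (u.re * t) / (δ + Real.exp t)) := by
    intro t S hS
    rw [norm_div, norm_neg, norm_exp_mul_ofReal, norm_pow, inv_mul_eq_div, div_div, sq]
    have := hle t S hS
    gcongr
    linarith [Real.exp_pos t]
  exact (hasDerivAt_integral_of_dominated_loc_of_deriv_le hnhds
    (Eventually.of_forall fun S => (by fun_prop : Measurable _).aestronglyMeasurable)
    (integrable_exp_mul_div_add_exp hu0 hu1 hS₀) (by fun_prop : Measurable _).aestronglyMeasurable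
    (Eventually.of_forall hdom)
    ((Real.integrable_exp_mul_div_add_exp hu0 hu1 hδ).const_mul δ⁻¹)
    (Eventually.of_forall fun t S hS => hasDerivAt_exp_mul_div_add_exp u t (hne t S hS))).2
    |>.differentiableAt.differentiableWithinAt

lemma ofReal_exp_cpow (t : ℝ) (w : ℂ) : (Real.exp t : ℂ) ^ w = exp (w * t) := by
  rw [cpow_def_of_ne_zero (ofReal_ne_zero.2 (Real.exp_pos t).ne'),
    ← ofReal_log (Real.exp_pos t).le, Real.log_exp, mul_comm]

lemma integral_exp_mul_div_ofReal_add_exp (u : ℂ) {s : ℝ} (hs : 0 < s) :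
    ∫ t : ℝ, exp (u * t) / (s + exp t) =
      (s : ℂ) ^ (u - 1) * ∫ t : ℝ, exp (u * t) / (1 + exp t) := by
  obtain ⟨c, rfl⟩ : ∃ c, Real.exp c = s := ⟨Real.log s, Real.exp_log hs⟩
  rw [← integral_add_right_eq_self _ c, ← integral_const_mul, ofReal_exp_cpow]
  congr 1 with t
  push_cast
  rw [mul_add, sub_mul, one_mul, exp_add, exp_add, exp_sub]
  field_simp

lemma integral_exp_mul_div_one_add_exp (u : ℂ) :
    ∫ t : ℝ, exp (u * t) / (1 + exp t) = betaIntegral u (1 - u) := by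
  rw [betaIntegral, intervalIntegral.integral_of_le zero_le_one, integral_Ioc_eq_integral_Ioo,
    ← Real.range_sigmoid, ← image_univ, integral_image_eq_integral_abs_deriv_smul MeasurableSet.univ
      (fun t _ => (Real.hasDerivAt_sigmoid t).hasDerivWithinAt) Real.sigmoid_injective.injOn,
    setIntegral_univ]
  congr 1 with t
  set y := (1 + Real.exp t)⁻¹ with hy_def
  have hy : 0 < y := by positivity
  have h1 : 1 - Real.sigmoid t = y := by
    rw [← Real.sigmoid_neg, Real.sigmoid_def, neg_neg]
  have h2 : Real.sigmoid t = Real.exp t * y := by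
    rw [← h1, ← Real.sigmoid_neg, ← Real.sigmoid_mul_rexp_neg, mul_left_comm, ← Real.exp_add,
      add_neg_cancel, Real.exp_zero, mul_one]
  rw [abs_of_pos (mul_pos (Real.sigmoid_pos t) (by linarith [Real.sigmoid_lt_one t])), real_smul]
  push_cast
  rw [show (1 : ℂ) - Real.sigmoid t = y by exact_mod_cast h1, h2, ofReal_mul,
    mul_cpow_ofReal_nonneg (Real.exp_pos t).le hy.le, ofReal_exp_cpow]
  have hy0 : (y : ℂ) ≠ 0 := ofReal_ne_zero.2 hy.ne'
  rw [mul_assoc (exp _), ← cpow_add _ _ hy0, show u - 1 + (1 - u - 1) = -1 by ring, cpow_neg_one,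
    sub_mul, one_mul, exp_sub, hy_def]
  push_cast
  field_simp

lemma betaIntegral_one_sub {u : ℂ} (hu0 : 0 < u.re) (hu1 : u.re < 1) :
    betaIntegral u (1 - u) = π / sin (π * u) := by
  rw [betaIntegral_eq_Gamma_mul_div u (1 - u) hu0 (by rw [sub_re, one_re]; linarith),
    add_sub_cancel, Gamma_one, div_one, Gamma_mul_Gamma_one_sub]

lemma eqOn_re_pos_of_eq_ofReal {E : Type*} [NormedAddCommGroup E] [NormedSpace ℂ E]
    {f g : ℂ → E} (hf : AnalyticOnNhd ℂ f {z | 0 < z.re}) (hg : AnalyticOnNhd ℂ g {z | 0 < z.re})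
    (h : ∀ s : ℝ, 0 < s → f s = g s) : EqOn f g {z | 0 < z.re} := by
  have hlim : Tendsto ((↑) : ℝ → ℂ) (𝓝[≠] 1) (𝓝[≠] 1) :=
    tendsto_nhdsWithin_of_tendsto_nhds_of_eventually_within _
      ((continuous_ofReal.tendsto' 1 1 ofReal_one).mono_left nhdsWithin_le_nhds)
      (eventually_nhdsWithin_of_forall fun s hs => by simpa using hs)
  have hfreq : ∃ᶠ z in 𝓝[≠] (1 : ℂ), f z = g z :=
    hlim.frequently
      ((eventually_nhdsWithin_of_eventually_nhds (lt_mem_nhds one_pos)).mono h).frequently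
  exact hf.eqOn_of_preconnected_of_frequently_eq hg (convex_halfSpace_re_gt 0).isPreconnected
    (by simp) hfreq

lemma integral_exp_mul_div_add_exp {u S : ℂ} (hu0 : 0 < u.re) (hu1 : u.re < 1) (hS : 0 < S.re) :
    ∫ t : ℝ, exp (u * t) / (S + exp t) = π * S ^ (u - 1) / sin (π * u) := by
  have hopen : IsOpen {z : ℂ | 0 < z.re} := isOpen_lt continuous_const continuous_re
  have hpow : AnalyticOnNhd ℂ (fun S : ℂ => π * S ^ (u - 1) / sin (π * u)) {z | 0 < z.re} :=
    DifferentiableOn.analyticOnNhd (fun z hz => by fun_prop (disch := exact Or.inl hz)) hopen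
  refine eqOn_re_pos_of_eq_ofReal
    ((differentiableOn_integral_exp_mul_div_add_exp hu0 hu1).analyticOnNhd hopen) hpow
    (fun s hs => ?_) hS
  rw [integral_exp_mul_div_ofReal_add_exp u hs, integral_exp_mul_div_one_add_exp,
    betaIntegral_one_sub hu0 hu1]
  ring

end Complex

/-- For complex `S` with positive real part and complex `u` with `0 < Re(u) < 1`,
`π S^u / sin(πu) = ∫_ℝ S e^{ut} / (S + e^t) dt` (principal branch power). -/
theorem pi_cpow_div_sin_eq_integral (S u : ℂ) (hS : 0 < S.re)
    (hu0 : 0 < u.re) (hu1 : u.re < 1) :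
    (Real.pi : ℂ) * S ^ u / Complex.sin ((Real.pi : ℂ) * u)
      = ∫ t : ℝ, S * Complex.exp (u * t) / (S + Complex.exp t) := by
  have hS0 : S ≠ 0 := fun h => by simp [h] at hS
  simp_rw [mul_div_assoc]
  rw [integral_const_mul, integral_exp_mul_div_add_exp hu0 hu1 hS, cpow_sub _ _ hS0, cpow_one]
  field_simp
end

section
/- Let (f_n) be a sequence of functions ℝ → [0,1] such that each f_n is strictly decreasing with limit 1 at -∞ and 0 at +∞, and such that for every δ > 0, f_n converges uniformly to the indicator 1_{x ≤ 0} on ℝ \ [-δ, δ]. Let (X_n) be random variables with E[f_n(X_n - r)] → p(r) for every r ∈ ℝ, where p is a continuous probability distribution function. Then X_n converges weakly in distribution to a random variable X with P(X ≤ r) = p(r). -/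
open MeasureTheory Filter

/-! Off `(-δ, δ)` the `f n` are eventually uniformly `ε`-close to `1_{x ≤ 0}`, which gives the
pointwise sandwich `f n (x - (r - δ)) - ε ≤ 1_{x ≤ r} ≤ f n (x - (r + δ)) + ε`. Taking
expectations squeezes `P(X n ≤ r)` between quantities tending to `p (r - δ) - ε` and
`p (r + δ) + ε`, and continuity of `p` at `r` closes the gap. -/

section StepApproximation

variable {g : ℝ → ℝ} {δ ε : ℝ}

lemma indicator_Iic_le_apply_sub_add (hg0 : ∀ x, 0 ≤ g x)
    (hg : ∀ x, δ ≤ |x| → dist (if x ≤ 0 then (1 : ℝ) else 0) (g x) < ε) (hδ : 0 ≤ δ)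
    (r x : ℝ) : Set.indicator (Set.Iic r) 1 x ≤ g (x - (r + δ)) + ε := by
  have hε : 0 < ε := dist_nonneg.trans_lt (hg δ (abs_of_nonneg hδ).ge)
  by_cases hx : x ≤ r
  · have hclose := hg (x - (r + δ)) (by rw [abs_of_nonpos (by linarith)]; linarith)
    rw [if_pos (by linarith), Real.dist_eq, abs_lt] at hclose
    rw [Set.indicator_of_mem (Set.mem_Iic.2 hx), Pi.one_apply]
    linarith [hclose.2]
  · rw [Set.indicator_of_notMem (mt Set.mem_Iic.1 hx)]
    linarith [hg0 (x - (r + δ))]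

lemma apply_sub_sub_le_indicator_Iic_add (hg1 : ∀ x, g x ≤ 1)
    (hg : ∀ x, δ ≤ |x| → dist (if x ≤ 0 then (1 : ℝ) else 0) (g x) < ε) (hδ : 0 ≤ δ)
    (r x : ℝ) : g (x - (r - δ)) ≤ Set.indicator (Set.Iic r) 1 x + ε := by
  have hε : 0 < ε := dist_nonneg.trans_lt (hg δ (abs_of_nonneg hδ).ge)
  by_cases hx : x ≤ r
  · rw [Set.indicator_of_mem (Set.mem_Iic.2 hx), Pi.one_apply]
    linarith [hg1 (x - (r - δ))]
  · have hclose := hg (x - (r - δ)) (by rw [abs_of_pos (by linarith)]; linarith)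
    rw [if_neg (by linarith), Real.dist_eq, abs_lt] at hclose
    rw [Set.indicator_of_notMem (mt Set.mem_Iic.1 hx)]
    linarith [hclose.1]

variable {Ω : Type*} [MeasurableSpace Ω] {μ : Measure Ω} {Y : Ω → ℝ}

lemma integrable_indicator_Iic_comp [IsFiniteMeasure μ] (hY : Measurable Y) (r : ℝ) :
    Integrable (fun ω => Set.indicator (Set.Iic r) (1 : ℝ → ℝ) (Y ω)) μ :=
  (integrable_const (1 : ℝ)).indicator (hY measurableSet_Iic)

lemma integral_indicator_Iic_comp (hY : Measurable Y) (r : ℝ) :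
    ∫ ω, Set.indicator (Set.Iic r) 1 (Y ω) ∂μ = μ.real {ω | Y ω ≤ r} :=
  integral_indicator_one (hY measurableSet_Iic)

lemma integrable_comp_sub_of_mem_Icc [IsFiniteMeasure μ] (hgm : Measurable g)
    (hg01 : ∀ x, g x ∈ Set.Icc (0 : ℝ) 1) (hY : Measurable Y) (c : ℝ) :
    Integrable (fun ω => g (Y ω - c)) μ := by
  refine .of_bound (hgm.comp (hY.sub_const c)).aestronglyMeasurable 1 (.of_forall fun ω => ?_)
  rw [Real.norm_eq_abs, abs_le]
  exact ⟨by linarith [(hg01 (Y ω - c)).1], (hg01 (Y ω - c)).2⟩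

variable [IsProbabilityMeasure μ]

lemma measureReal_le_integral_comp_sub_add (hgm : Measurable g)
    (hg01 : ∀ x, g x ∈ Set.Icc (0 : ℝ) 1)
    (hg : ∀ x, δ ≤ |x| → dist (if x ≤ 0 then (1 : ℝ) else 0) (g x) < ε) (hδ : 0 ≤ δ)
    (hY : Measurable Y) (r : ℝ) :
    μ.real {ω | Y ω ≤ r} ≤ ∫ ω, g (Y ω - (r + δ)) ∂μ + ε := by
  have hint := integrable_comp_sub_of_mem_Icc (μ := μ) hgm hg01 hY (r + δ)
  calc μ.real {ω | Y ω ≤ r} = ∫ ω, Set.indicator (Set.Iic r) 1 (Y ω) ∂μ :=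
        (integral_indicator_Iic_comp hY r).symm
    _ ≤ ∫ ω, (g (Y ω - (r + δ)) + ε) ∂μ :=
        integral_mono (integrable_indicator_Iic_comp hY r) (hint.add (integrable_const ε))
          fun ω => indicator_Iic_le_apply_sub_add (fun x => (hg01 x).1) hg hδ r (Y ω)
    _ = ∫ ω, g (Y ω - (r + δ)) ∂μ + ε := by
        rw [integral_add hint (integrable_const ε), integral_const, probReal_univ, one_smul]

lemma integral_comp_sub_le_measureReal_add (hgm : Measurable g)
    (hg01 : ∀ x, g x ∈ Set.Icc (0 : ℝ) 1)
    (hg : ∀ x, δ ≤ |x| → dist (if x ≤ 0 then (1 : ℝ) else 0) (g x) < ε) (hδ : 0 ≤ δ)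
    (hY : Measurable Y) (r : ℝ) :
    ∫ ω, g (Y ω - (r - δ)) ∂μ ≤ μ.real {ω | Y ω ≤ r} + ε := by
  have hint := integrable_indicator_Iic_comp (μ := μ) hY r
  calc ∫ ω, g (Y ω - (r - δ)) ∂μ ≤ ∫ ω, (Set.indicator (Set.Iic r) 1 (Y ω) + ε) ∂μ :=
        integral_mono (integrable_comp_sub_of_mem_Icc hgm hg01 hY _)
          (hint.add (integrable_const ε))
          fun ω => apply_sub_sub_le_indicator_Iic_add (fun x => (hg01 x).2) hg hδ r (Y ω)
    _ = μ.real {ω | Y ω ≤ r} + ε := by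
        rw [integral_add hint (integrable_const ε), integral_const, probReal_univ, one_smul,
          integral_indicator_Iic_comp hY r]

end StepApproximation

lemma Continuous.exists_pos_abs_sub_lt {p : ℝ → ℝ} (hp : Continuous p) (r : ℝ) {ε : ℝ}
    (hε : 0 < ε) : ∃ δ > 0, |p (r + δ) - p r| < ε ∧ |p (r - δ) - p r| < ε := by
  have hplus : Tendsto (fun δ => p (r + δ)) (nhds 0) (nhds (p r)) :=
    (by fun_prop : Continuous fun δ => p (r + δ)).tendsto' 0 _ (by simp)
  have hminus : Tendsto (fun δ => p (r - δ)) (nhds 0) (nhds (p r)) :=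
    (by fun_prop : Continuous fun δ => p (r - δ)).tendsto' 0 _ (by simp)
  have hnear := (Metric.tendsto_nhds.1 hplus ε hε).and (Metric.tendsto_nhds.1 hminus ε hε)
  obtain ⟨δ, hpδ, hδ⟩ :=
    ((hnear.filter_mono nhdsWithin_le_nhds).and (self_mem_nhdsWithin (s := Set.Ioi 0))).exists
  exact ⟨δ, hδ, hpδ⟩

theorem weak_convergence_from_expectations_general
    {Ω : Type*} [MeasurableSpace Ω] (μ : Measure Ω) [IsProbabilityMeasure μ]
    (f : ℕ → ℝ → ℝ)
    (hf01 : ∀ n x, f n x ∈ Set.Icc (0 : ℝ) 1)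
    (hanti : ∀ n, StrictAnti (f n))
    (hunif : ∀ δ > (0 : ℝ),
      TendstoUniformlyOn f (fun x => if x ≤ 0 then 1 else 0) atTop {x : ℝ | δ ≤ |x|})
    (X : ℕ → Ω → ℝ) (hX : ∀ n, Measurable (X n))
    (p : ℝ → ℝ) (hp : Continuous p)
    (hE : ∀ r : ℝ, Tendsto (fun n => ∫ ω, f n (X n ω - r) ∂μ) atTop (nhds (p r))) :
    ∀ r : ℝ, Tendsto (fun n => (μ {ω | X n ω ≤ r}).toReal) atTop (nhds (p r)) := by
  intro r
  refine Metric.tendsto_nhds.2 fun ε hε => ?_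
  obtain ⟨δ, hδ, hp_plus, hp_minus⟩ := hp.exists_pos_abs_sub_lt r (by positivity : 0 < ε / 3)
  filter_upwards [Metric.tendstoUniformlyOn_iff.1 (hunif δ hδ) (ε / 3) (by positivity),
    Metric.tendsto_nhds.1 (hE (r + δ)) (ε / 3) (by positivity),
    Metric.tendsto_nhds.1 (hE (r - δ)) (ε / 3) (by positivity)] with n hclose hE_plus hE_minus
  have hmeas := (hanti n).antitone.measurable
  have hupper := measureReal_le_integral_comp_sub_add (μ := μ) hmeas (hf01 n) hclose hδ.le (hX n) r
  have hlower := integral_comp_sub_le_measureReal_add (μ := μ) hmeas (hf01 n) hclose hδ.le (hX n) r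
  rw [← measureReal_def, Real.dist_eq, abs_lt]
  rw [Real.dist_eq, abs_lt] at hE_plus hE_minus
  rw [abs_lt] at hp_plus hp_minus
  constructor <;> linarith [hE_plus.2, hE_minus.1, hp_plus.2, hp_minus.1]

/-- Lemma 4.1.38 of Borodin–Corwin: if `f_n : ℝ → [0,1]` are strictly decreasing with
limits `1` at `-∞` and `0` at `+∞`, converging uniformly to `1_{x ≤ 0}` away from any
neighborhood of `0`, and `E[f_n(X_n - r)] → p(r)` for a continuous probability
distribution function `p`, then `X_n` converges weakly in distribution to a random
variable with cumulative distribution function `p` (since `p` is continuous, the CDFs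
converge at every point). -/
theorem weak_convergence_from_expectations
    {Ω : Type*} [MeasurableSpace Ω] (μ : Measure Ω) [IsProbabilityMeasure μ]
    (f : ℕ → ℝ → ℝ)
    (hf01 : ∀ n x, f n x ∈ Set.Icc (0 : ℝ) 1)
    (hanti : ∀ n, StrictAnti (f n))
    (hbot : ∀ n, Tendsto (f n) atBot (nhds 1))
    (htop : ∀ n, Tendsto (f n) atTop (nhds 0))
    (hunif : ∀ δ > (0 : ℝ),
      TendstoUniformlyOn f (fun x => if x ≤ 0 then 1 else 0) atTop {x : ℝ | δ ≤ |x|})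
    (X : ℕ → Ω → ℝ) (hX : ∀ n, Measurable (X n))
    (p : ℝ → ℝ) (hp : Continuous p) (hpmono : Monotone p)
    (hp0 : Tendsto p atBot (nhds 0)) (hp1 : Tendsto p atTop (nhds 1))
    (hE : ∀ r : ℝ, Tendsto (fun n => ∫ ω, f n (X n ω - r) ∂μ) atTop (nhds (p r))) :
    ∀ r : ℝ, Tendsto (fun n => (μ {ω | X n ω ≤ r}).toReal) atTop (nhds (p r)) :=
  weak_convergence_from_expectations_general μ f hf01 hanti hunif X hX p hp hE
end
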